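/- arXiv:2307.03983 — 2 statements merged into one kernel-verified Lean document; each statement's English description precedes it below -/
import Mathlib

section
/- The probability QM = P( Ps·Z < τ(G), log2(1 + Ps·Z) < Rs, G > α0 ) equals Σ_{i=0}^{M} C(M,i)·(−1)^i·e^{i/Ps}·u(α0, α1, i/(α0·Ps)) + (1 − e^{−αs})^M·e^{−α1}, where C(M,i) is the binomial coefficient. -/
open MeasureTheory ProbabilityTheory Real

/-- The interference threshold `τ(g) = max{0, g/α₀ − 1}`. -/
noncomputable def tau (α0 g : ℝ) : ℝ := max 0 (g / α0 - 1)

/-- `u(a,b,c) = (e^{−a(c+1)} − e^{−b(c+1)}) / (c+1)`. -/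
noncomputable def uFun (a b c : ℝ) : ℝ :=
  (Real.exp (-a * (c + 1)) - Real.exp (-b * (c + 1))) / (c + 1)

/-!
Write `Z = max Hₘ`. On `{G > α₀}` the event says `Z < t(G)` with `t(g) = min(αₛ, (g − α₀)/(α₀Pₛ))`,
and `t(g) > 0` there, so `P(Z < t(g)) = (1 − e^{−t(g)})^M` by independence of the `Hₘ`. As `G` is
independent of `Z`, `Q_M = ∫_{α₀}^∞ e^{−g} (1 − e^{−t(g)})^M dg`. Beyond `α₁ = α₀ + α₀Pₛαₛ` the
minimum is `αₛ`, which gives the term `(1 − e^{−αₛ})^M e^{−α₁}`; on `(α₀, α₁]` a binomial expansion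
turns the integrand into a combination of exponentials `e^{−(c+1)g}`, whose integrals are `u`.
-/

open Set

lemma Real.iSup_lt_iff_of_pos {ι : Type*} [Finite ι] {f : ι → ℝ} {s : ℝ} (hs : 0 < s) :
    ⨆ i, f i < s ↔ ∀ i, f i < s := by
  cases isEmpty_or_nonempty ι
  · simp [Real.iSup_of_isEmpty, hs]
  · obtain ⟨j, hj⟩ := exists_eq_ciSup_of_finite (f := f)
    exact ⟨fun h i => (le_ciSup (Set.finite_range f).bddAbove i).trans_lt h, fun h => hj ▸ h j⟩

lemma one_sub_exp_neg_pow_mem_Icc (n : ℕ) {s : ℝ} (hs : 0 ≤ s) : (1 - exp (-s)) ^ n ∈ Icc 0 1 := by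
  have h0 : 0 ≤ 1 - exp (-s) := sub_nonneg.2 (exp_le_one_iff.2 (neg_nonpos.2 hs))
  exact ⟨pow_nonneg h0 n, pow_le_one₀ h0 (sub_le_self _ (exp_pos _).le)⟩

lemma two_rpow_sub_one_div_pos {R P : ℝ} (hR : 0 < R) (hP : 0 < P) : 0 < (2 ^ R - 1) / P :=
  div_pos (sub_pos.2 (one_lt_rpow one_lt_two hR)) hP

namespace ProbabilityTheory

variable {Ω : Type*} [MeasurableSpace Ω] {μ : Measure Ω}

lemma iIndepFun.indepFun_cons {β : Type*} [MeasurableSpace β] {n : ℕ} {G : Ω → β}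
    {H : Fin n → Ω → β} (h : iIndepFun (Fin.cons G H : Fin (n + 1) → Ω → β) μ)
    (hG : Measurable G) (hH : ∀ i, Measurable (H i)) :
    IndepFun G (fun ω i => H i ω) μ := by
  classical
  have hsplit := h.indepFun_finset {0} (Finset.univ.map (Fin.succEmb n))
    (by simp [Fin.succ_ne_zero]) (Fin.cases hG hH)
  exact hsplit.comp (measurable_pi_apply ⟨0, Finset.mem_singleton_self 0⟩)
    (measurable_pi_lambda _ fun (i : Fin n) => measurable_pi_apply ⟨i.succ, by simp⟩)

lemma iIndepFun.measure_iSup_lt {ι : Type*} [Fintype ι] {H : ι → Ω → ℝ} (h : iIndepFun H μ)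
    (hH : ∀ i, Measurable (H i)) {ν : Measure ℝ} (hν : ∀ i, μ.map (H i) = ν) {s : ℝ}
    (hs : 0 < s) :
    μ {ω | ⨆ i, H i ω < s} = ν (Iio s) ^ Fintype.card ι := by
  have hset : {ω | ⨆ i, H i ω < s} = ⋂ i, H i ⁻¹' Iio s := by
    ext ω
    simp [Real.iSup_lt_iff_of_pos hs]
  have hfactor (i : ι) : μ (H i ⁻¹' Iio s) = ν (Iio s) := by
    rw [← hν i, Measure.map_apply (hH i) measurableSet_Iio]
  rw [hset, h.meas_iInter fun i => ⟨Iio s, measurableSet_Iio, rfl⟩,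
    Finset.prod_congr rfl fun i _ => hfactor i, Finset.prod_const, Finset.card_univ]

lemma IndepFun.measure_mem_and_lt_eq_setLIntegral {α : Type*} [MeasurableSpace α]
    [IsFiniteMeasure μ] {X : Ω → α} {Y : Ω → ℝ} (h : IndepFun X Y μ) (hX : Measurable X)
    (hY : Measurable Y) {A : Set α} (hA : MeasurableSet A) {f : α → ℝ} (hf : Measurable f) :
    μ {ω | X ω ∈ A ∧ Y ω < f (X ω)} = ∫⁻ x in A, μ.map Y (Iio (f x)) ∂μ.map X := by
  classical
  set S : Set (α × ℝ) := {p | p.1 ∈ A ∧ p.2 < f p.1}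
  have hS : MeasurableSet S :=
    (measurable_fst hA).inter (measurableSet_lt measurable_snd (hf.comp measurable_fst))
  have hsection (x : α) : Prod.mk x ⁻¹' S = if x ∈ A then Iio (f x) else ∅ := by
    split_ifs with hx <;> ext y <;> simp [S, hx]
  rw [← lintegral_indicator hA]
  change μ ((fun ω => (X ω, Y ω)) ⁻¹' S) = _
  rw [← Measure.map_apply (hX.prodMk hY) hS,
    h.map_prod_eq_prod_map_map hX.aemeasurable hY.aemeasurable, Measure.prod_apply hS]
  refine lintegral_congr fun x => ?_
  rw [hsection, indicator_apply]
  split_ifs <;> simp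

lemma expMeasure_Iio {r : ℝ} (hr : 0 < r) (s : ℝ) :
    expMeasure r (Iio s) = ENNReal.ofReal (1 - exp (-(r * s))) := by
  have := isProbabilityMeasure_expMeasure hr
  have : NullSingletonClass (expMeasure r) :=
    show NullSingletonClass (volume.withDensity _) from inferInstance
  rw [measure_congr Iio_ae_eq_Iic, ← ofReal_cdf, cdf_expMeasure_eq hr]
  split_ifs with hs
  · rfl
  · rw [ENNReal.ofReal_zero, eq_comm, ENNReal.ofReal_eq_zero, sub_nonpos, one_le_exp_iff]
    nlinarith

lemma iIndepFun.measure_iSup_lt_of_expMeasure {n : ℕ} {H : Fin n → Ω → ℝ} (h : iIndepFun H μ)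
    (hH : ∀ i, Measurable (H i)) (hexp : ∀ i, μ.map (H i) = expMeasure 1) {s : ℝ} (hs : 0 < s) :
    μ {ω | ⨆ i, H i ω < s} = ENNReal.ofReal ((1 - exp (-s)) ^ n) := by
  rw [h.measure_iSup_lt hH hexp hs, expMeasure_Iio one_pos, one_mul, Fintype.card_fin,
    ← ENNReal.ofReal_pow (sub_nonneg.2 (exp_le_one_iff.2 (by linarith)))]

lemma toReal_setLIntegral_expMeasure_one_Ioi {a : ℝ} (ha : 0 ≤ a) {f : ℝ → ℝ}
    (hf : Measurable f) (hf01 : ∀ x ∈ Ioi a, f x ∈ Icc 0 1) :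
    (∫⁻ x in Ioi a, ENNReal.ofReal (f x) ∂expMeasure 1).toReal =
      ∫ x in Ioi a, exp (-x) * f x := by
  have hint : IntegrableOn (fun x => exp (-x) * f x) (Ioi a) := by
    have hexp : IntegrableOn (fun x => exp (-x)) (Ioi a) := by
      simpa using exp_neg_integrableOn_Ioi a one_pos
    refine Integrable.mono' hexp (by fun_prop) (ae_restrict_of_forall_mem measurableSet_Ioi
      fun x hx => ?_)
    rw [norm_mul, norm_of_nonneg (exp_pos _).le, norm_of_nonneg (hf01 x hx).1]
    exact mul_le_of_le_one_right (exp_pos _).le (hf01 x hx).2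
  have hnonneg : ∀ x ∈ Ioi a, 0 ≤ exp (-x) * f x := fun x hx =>
    mul_nonneg (exp_pos _).le (hf01 x hx).1
  rw [← ENNReal.toReal_ofReal (setIntegral_nonneg measurableSet_Ioi hnonneg),
    ofReal_integral_eq_lintegral_ofReal hint (ae_restrict_of_forall_mem measurableSet_Ioi hnonneg),
    expMeasure, gammaMeasure, setLIntegral_withDensity_eq_setLIntegral_mul _ (f := gammaPDF 1 1)
      (measurable_gammaPDFReal 1 1).ennreal_ofReal hf.ennreal_ofReal measurableSet_Ioi]
  congr 1
  refine setLIntegral_congr_fun measurableSet_Ioi fun x hx => ?_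
  have hdensity : gammaPDF 1 1 x = ENNReal.ofReal (exp (-x)) := by
    have := exponentialPDF_of_nonneg (r := 1) (ha.trans hx.out.le)
    simp only [one_mul] at this
    exact this
  rw [Pi.mul_apply, hdensity, ← ENNReal.ofReal_mul (exp_pos _).le]

end ProbabilityTheory

lemma one_sub_pow_eq_sum {R : Type*} [CommRing R] (n : ℕ) (y : R) :
    (1 - y) ^ n = ∑ i ∈ Finset.range (n + 1), (n.choose i : R) * (-1) ^ i * y ^ i := by
  rw [sub_eq_neg_add, add_pow]
  refine Finset.sum_congr rfl fun i _ => ?_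
  rw [one_pow, mul_one, neg_pow]
  ring

lemma integral_exp_neg_mul_eq_uFun (a b : ℝ) {c : ℝ} (hc : -1 < c) :
    ∫ x in a..b, exp (-((c + 1) * x)) = uFun a b c := by
  have hc1 : -(c + 1) ≠ 0 := by linarith
  have := intervalIntegral.integral_comp_mul_left (a := a) (b := b) exp hc1
  simp only [neg_mul] at this
  rw [this, integral_exp, uFun, smul_eq_mul]
  field_simp
  ring_nf

lemma exp_neg_mul_one_sub_exp_pow_eq_sum (n : ℕ) (a x : ℝ) {c : ℝ} (hc : c ≠ 0) :
    exp (-x) * (1 - exp (-((x - a) / c))) ^ n =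
      ∑ i ∈ Finset.range (n + 1),
        (n.choose i : ℝ) * (-1) ^ i * exp (i * a / c) * exp (-((i / c + 1) * x)) := by
  rw [one_sub_pow_eq_sum, Finset.mul_sum]
  refine Finset.sum_congr rfl fun i _ => ?_
  have : exp (-x) * exp (-((x - a) / c)) ^ i = exp (i * a / c) * exp (-((i / c + 1) * x)) := by
    rw [← exp_nat_mul, ← exp_add, ← exp_add]
    congr 1
    field_simp
    ring
  linear_combination ((n.choose i : ℝ) * (-1) ^ i) * this

lemma integral_exp_neg_mul_one_sub_exp_pow (n : ℕ) (a b : ℝ) {c : ℝ} (hc : 0 < c) :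
    ∫ x in a..b, exp (-x) * (1 - exp (-((x - a) / c))) ^ n =
      ∑ i ∈ Finset.range (n + 1),
        (n.choose i : ℝ) * (-1) ^ i * exp (i * a / c) * uFun a b (i / c) := by
  simp_rw [exp_neg_mul_one_sub_exp_pow_eq_sum n a _ hc.ne']
  rw [intervalIntegral.integral_finsetSum
    fun i _ => (by fun_prop : Continuous _).intervalIntegrable _ _]
  refine Finset.sum_congr rfl fun i _ => ?_
  rw [intervalIntegral.integral_const_mul,
    integral_exp_neg_mul_eq_uFun a b (by linarith [div_nonneg i.cast_nonneg hc.le])]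

lemma integral_exp_neg_mul_one_sub_exp_neg_min_pow_Ioi (n : ℕ) {a P s : ℝ} (ha : 0 < a)
    (hP : 0 < P) (hs : 0 ≤ s) :
    ∫ x in Ioi a, exp (-x) * (1 - exp (-min s ((x - a) / (a * P)))) ^ n =
      ∑ i ∈ Finset.range (n + 1),
          (n.choose i : ℝ) * (-1) ^ i * exp (i / P) * uFun a (a + a * P * s) (i / (a * P)) +
        (1 - exp (-s)) ^ n * exp (-(a + a * P * s)) := by
  set b := a + a * P * s with hb
  have hc : 0 < a * P := mul_pos ha hP
  have hab : a ≤ b := le_add_of_nonneg_right (by positivity)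
  have hbody : EqOn (fun x => exp (-x) * (1 - exp (-min s ((x - a) / (a * P)))) ^ n)
      (fun x => exp (-x) * (1 - exp (-((x - a) / (a * P)))) ^ n) (Ioc a b) := by
    intro x hx
    dsimp only
    rw [min_eq_right ((div_le_iff₀ hc).2 (by linarith [hx.2]))]
  have htail : EqOn (fun x => exp (-x) * (1 - exp (-min s ((x - a) / (a * P)))) ^ n)
      (fun x => exp (-x) * (1 - exp (-s)) ^ n) (Ioi b) := by
    intro x hx
    dsimp only
    rw [min_eq_left ((le_div_iff₀ hc).2 (by linarith [hx.out]))]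
  have hint_tail : IntegrableOn (fun x => exp (-x) * (1 - exp (-s)) ^ n) (Ioi b) := by
    have := (exp_neg_integrableOn_Ioi b one_pos).mul_const ((1 - exp (-s)) ^ n)
    simp only [neg_mul, one_mul] at this
    exact this
  rw [← Ioc_union_Ioi_eq_Ioi hab, setIntegral_union (Ioc_disjoint_Ioi le_rfl) measurableSet_Ioi
      (Continuous.integrableOn_Ioc (by fun_prop))
      (hint_tail.congr_fun htail.symm measurableSet_Ioi),
    setIntegral_congr_fun measurableSet_Ioc hbody, setIntegral_congr_fun measurableSet_Ioi htail,
    ← intervalIntegral.integral_of_le hab, integral_exp_neg_mul_one_sub_exp_pow n a b hc,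
    integral_mul_const, integral_exp_neg_Ioi, mul_comm (exp _)]
  congr 1
  refine Finset.sum_congr rfl fun i _ => ?_
  rw [mul_comm a P, mul_div_mul_right _ _ ha.ne']

lemma mul_lt_tau_iff {α0 P g z : ℝ} (hα0 : 0 < α0) (hP : 0 < P) (hg : α0 < g) :
    P * z < tau α0 g ↔ z < (g - α0) / (α0 * P) := by
  have hτ : tau α0 g = (g - α0) / α0 := by
    rw [tau, max_eq_right (by rw [sub_nonneg, one_le_div hα0]; exact hg.le), sub_div,
      div_self hα0.ne']
  rw [hτ, lt_div_iff₀ hα0, lt_div_iff₀ (mul_pos hα0 hP)]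
  constructor <;> intro h <;> linarith

lemma logb_two_one_add_mul_lt_iff {P R z : ℝ} (hP : 0 < P) (hz : 0 ≤ z) :
    logb 2 (1 + P * z) < R ↔ z < (2 ^ R - 1) / P := by
  rw [logb_lt_iff_lt_rpow one_lt_two (by positivity), lt_div_iff₀ hP]
  constructor <;> intro h <;> linarith

lemma mul_lt_tau_and_logb_lt_iff {α0 P R g z : ℝ} (hα0 : 0 < α0) (hP : 0 < P) (hz : 0 ≤ z) :
    (P * z < tau α0 g ∧ logb 2 (1 + P * z) < R ∧ g > α0) ↔
      g ∈ Ioi α0 ∧ z < min ((2 ^ R - 1) / P) ((g - α0) / (α0 * P)) := by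
  rw [lt_min_iff, logb_two_one_add_mul_lt_iff hP hz, mem_Ioi]
  constructor
  · rintro ⟨hτ, hR, hg⟩
    exact ⟨hg, hR, (mul_lt_tau_iff hα0 hP hg).1 hτ⟩
  · rintro ⟨hg, hR, hτ⟩
    exact ⟨(mul_lt_tau_iff hα0 hP hg).2 hτ, hR, hg⟩

theorem hsic_pa_QM_closed_form_general
    {Ω : Type*} [MeasurableSpace Ω] (μ : Measure Ω) [IsProbabilityMeasure μ]
    (M : ℕ)
    (P0 Ps R0 Rs : ℝ) (hP0 : 0 < P0) (hPs : 0 < Ps) (hR0 : 0 < R0) (hRs : 0 < Rs)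
    (ε0 εs α0 αs α1 : ℝ)
    (hε0 : ε0 = 2 ^ R0 - 1) (hεs : εs = 2 ^ Rs - 1)
    (hα0 : α0 = ε0 / P0) (hαs : αs = εs / Ps) (hα1 : α1 = (1 + εs) * α0)
    (G : Ω → ℝ) (H : Fin M → Ω → ℝ)
    (hGmeas : Measurable G) (hHmeas : ∀ m, Measurable (H m))
    (hHnn : ∀ m ω, 0 ≤ H m ω)
    (hGdist : Measure.map G μ = expMeasure 1)
    (hHdist : ∀ m, Measure.map (H m) μ = expMeasure 1)
    (hIndep : iIndepFun
      (Fin.cons G H : Fin (M + 1) → Ω → ℝ) μ)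
    (Z : Ω → ℝ) (hZ : ∀ ω, Z ω = ⨆ m : Fin M, H m ω)
    :
    (μ {ω | Ps * Z ω < tau α0 (G ω) ∧
            Real.logb 2 (1 + Ps * Z ω) < Rs ∧ G ω > α0}).toReal =
      (∑ i ∈ Finset.range (M + 1),
        (M.choose i : ℝ) * (-1 : ℝ) ^ i * Real.exp ((i : ℝ) / Ps) *
          uFun α0 α1 ((i : ℝ) / (α0 * Ps))) +
      (1 - Real.exp (-αs)) ^ M * Real.exp (-α1) := by
  have hα0pos : 0 < α0 := hα0 ▸ hε0 ▸ two_rpow_sub_one_div_pos hR0 hP0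
  have hαspos : 0 < αs := hαs ▸ hεs ▸ two_rpow_sub_one_div_pos hRs hPs
  have hα1_eq : α1 = α0 + α0 * Ps * αs := by
    rw [hα1, hαs]
    field_simp
  obtain rfl : Z = fun ω => ⨆ m, H m ω := funext hZ
  set t : ℝ → ℝ := fun g => min αs ((g - α0) / (α0 * Ps))
  have ht_pos (g : ℝ) (hg : g ∈ Ioi α0) : 0 < t g :=
    lt_min hαspos (div_pos (sub_pos.2 hg) (mul_pos hα0pos hPs))
  have hevent : {ω | Ps * (⨆ m, H m ω) < tau α0 (G ω) ∧
      Real.logb 2 (1 + Ps * (⨆ m, H m ω)) < Rs ∧ G ω > α0} =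
      {ω | G ω ∈ Ioi α0 ∧ (⨆ m, H m ω) < t (G ω)} := by
    ext ω
    exact (mul_lt_tau_and_logb_lt_iff hα0pos hPs (Real.iSup_nonneg (hHnn · ω))).trans
      (by rw [← hεs, ← hαs]; rfl)
  have hZmeas : Measurable fun ω => ⨆ m, H m ω := Measurable.iSup hHmeas
  have hindep : IndepFun G (fun ω => ⨆ m, H m ω) μ :=
    (hIndep.indepFun_cons hGmeas hHmeas).comp measurable_id
      (Measurable.iSup fun m => measurable_pi_apply m)
  have hZlaw (g : ℝ) (hg : g ∈ Ioi α0) :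
      μ.map (fun ω => ⨆ m, H m ω) (Iio (t g)) = ENNReal.ofReal ((1 - exp (-t g)) ^ M) := by
    rw [Measure.map_apply hZmeas measurableSet_Iio]
    exact (hIndep.precomp (Fin.succ_injective M)).measure_iSup_lt_of_expMeasure hHmeas hHdist
      (ht_pos g hg)
  rw [hevent, hindep.measure_mem_and_lt_eq_setLIntegral hGmeas hZmeas measurableSet_Ioi
      (by fun_prop), hGdist, setLIntegral_congr_fun measurableSet_Ioi hZlaw,
    toReal_setLIntegral_expMeasure_one_Ioi hα0pos.le (by fun_prop)
      fun g hg => one_sub_exp_neg_pow_mem_Icc M (ht_pos g hg).le,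
    integral_exp_neg_mul_one_sub_exp_neg_min_pow_Ioi M hα0pos hPs hαspos.le, hα1_eq]

/-- closed form for the probability `Q_M` appearing in the proof of
Theorem 1 for the HSIC-PA scheme. -/
theorem hsic_pa_QM_closed_form
    {Ω : Type*} [MeasurableSpace Ω] (μ : Measure Ω) [IsProbabilityMeasure μ]
    (M : ℕ) (hM : 1 ≤ M)
    (P0 Ps R0 Rs : ℝ) (hP0 : 0 < P0) (hPs : 0 < Ps) (hR0 : 0 < R0) (hRs : 0 < Rs)
    (ε0 εs α0 αs α1 : ℝ)
    (hε0 : ε0 = 2 ^ R0 - 1) (hεs : εs = 2 ^ Rs - 1)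
    (hα0 : α0 = ε0 / P0) (hαs : αs = εs / Ps) (hα1 : α1 = (1 + εs) * α0)
    (G : Ω → ℝ) (H : Fin M → Ω → ℝ)
    (hGmeas : Measurable G) (hHmeas : ∀ m, Measurable (H m))
    (hGnn : ∀ ω, 0 ≤ G ω) (hHnn : ∀ m ω, 0 ≤ H m ω)
    (hGdist : Measure.map G μ = expMeasure 1)
    (hHdist : ∀ m, Measure.map (H m) μ = expMeasure 1)
    (hIndep : iIndepFun
      (Fin.cons G H : Fin (M + 1) → Ω → ℝ) μ)
    (Z : Ω → ℝ) (hZ : ∀ ω, Z ω = ⨆ m : Fin M, H m ω)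
    :
    (μ {ω | Ps * Z ω < tau α0 (G ω) ∧
            Real.logb 2 (1 + Ps * Z ω) < Rs ∧ G ω > α0}).toReal =
      (∑ i ∈ Finset.range (M + 1),
        (M.choose i : ℝ) * (-1 : ℝ) ^ i * Real.exp ((i : ℝ) / Ps) *
          uFun α0 α1 ((i : ℝ) / (α0 * Ps))) +
      (1 - Real.exp (-αs)) ^ M * Real.exp (-α1) :=
  hsic_pa_QM_closed_form_general μ M P0 Ps R0 Rs hP0 hPs hR0 hRs ε0 εs α0 αs α1 hε0 hεs hα0 hαs hα1
    G H hGmeas hHmeas hHnn hGdist hHdist hIndep Z hZ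
end

section
/- The probability F̃ = P( Ps·Z > τ(G), log2(1 + τ(G)) < Rs, G > α0 ) equals e^{−α0} − e^{−α1} − Σ_{i=0}^{M} C(M,i)·(−1)^i·e^{i/Ps}·u(α0, α1, i/(Ps·α0)), where C(M,i) is the binomial coefficient. -/
open MeasureTheory ProbabilityTheory Real

open Set

/-!
On `{G > α0}` the threshold is `τ(G) = G/α0 − 1`, so the event is
`{α0 < G < α1, Z > (G/α0 − 1)/Ps}` with `α1 = 2^Rs α0`. The maximum `Z` of the `Hm` is
independent of `G` and has tail `1 − (1 − e^{−t})^M`, so by Fubini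
`F̃ = ∫_{α0}^{α1} e^{−g} (1 − (1 − e^{−(g/α0 − 1)/Ps})^M) dg`. Expanding the power binomially
leaves integrals of exponentials, each of which is a value of `u`.
-/

lemma intervalIntegral_exp_neg_mul_eq_uFun (a b c : ℝ) (hc : c + 1 ≠ 0) :
    ∫ x in a..b, exp (-((c + 1) * x)) = uFun a b c := by
  have h := intervalIntegral.integral_comp_mul_left exp (neg_ne_zero.mpr hc) (a := a) (b := b)
  simp only [neg_mul, integral_exp, smul_eq_mul] at h
  rw [h, uFun]
  field_simp
  ring_nf

lemma intervalIntegral_exp_neg_mul_one_sub_exp_pow (a b p q : ℝ) (hq : 0 ≤ q) (M : ℕ) :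
    ∫ x in a..b, exp (-x) * (1 - exp (-(q * x - p))) ^ M =
      ∑ i ∈ Finset.range (M + 1),
        (M.choose i : ℝ) * (-1) ^ i * exp (i * p) * uFun a b (i * q) := by
  have hexpand : ∀ x, exp (-x) * (1 - exp (-(q * x - p))) ^ M =
      ∑ i ∈ Finset.range (M + 1),
        (M.choose i : ℝ) * (-1) ^ i * exp (i * p) * exp (-((i * q + 1) * x)) := by
    intro x
    rw [sub_eq_neg_add, add_pow, Finset.mul_sum]
    refine Finset.sum_congr rfl fun i _ => ?_
    have : exp (-x) * exp (-(q * x - p)) ^ i = exp (i * p) * exp (-((i * q + 1) * x)) := by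
      rw [← exp_nat_mul, ← exp_add, ← exp_add]
      ring_nf
    rw [neg_pow, one_pow, mul_one]
    linear_combination (M.choose i : ℝ) * (-1) ^ i * this
  simp_rw [hexpand]
  rw [intervalIntegral.integral_finsetSum fun i _ =>
    (by fun_prop : Continuous _).intervalIntegrable _ _]
  refine Finset.sum_congr rfl fun i _ => ?_
  rw [intervalIntegral.integral_const_mul,
    intervalIntegral_exp_neg_mul_eq_uFun _ _ _ (by positivity)]

lemma setIntegral_expMeasure {r : ℝ} (hr : 0 < r) {A : Set ℝ} (hA : MeasurableSet A)
    (hA0 : A ⊆ Ici 0) (g : ℝ → ℝ) :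
    ∫ x in A, g x ∂(expMeasure r) = ∫ x in A, r * exp (-(r * x)) * g x := by
  rw [expMeasure, gammaMeasure,
    setIntegral_withDensity_eq_setIntegral_toReal_smul₀' (f := gammaPDF 1 r) A
    (measurable_gammaPDFReal 1 r).ennreal_ofReal.aemeasurable
    (ae_of_all _ fun _ => ENNReal.ofReal_lt_top) g]
  refine setIntegral_congr_fun hA fun x hx => ?_
  rw [gammaPDF, ENNReal.toReal_ofReal (gammaPDFReal_nonneg one_pos hr x), smul_eq_mul]
  simp [gammaPDFReal, not_lt.mpr (mem_Ici.mp (hA0 hx))]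

section Probability

variable {Ω : Type*} [MeasurableSpace Ω] {μ : Measure Ω}

lemma ProbabilityTheory.iIndepFun.indepFun_head_tail {β : Type*} [MeasurableSpace β] {n : ℕ}
    {X : Ω → β} {Y : Fin n → Ω → β} (h : iIndepFun (Fin.cons X Y : Fin (n + 1) → Ω → β) μ)
    (hX : Measurable X) (hY : ∀ i, Measurable (Y i)) :
    IndepFun X (fun ω i => Y i ω) μ := by
  have hmeas : ∀ i, Measurable ((Fin.cons X Y : Fin (n + 1) → Ω → β) i) :=
    Fin.cases hX hY
  exact (h.indepFun_finset {0} {0}ᶜ disjoint_compl_right hmeas).comp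
    (measurable_pi_apply (⟨0, Finset.mem_singleton_self 0⟩ : ({0} : Finset (Fin (n + 1)))))
    (measurable_pi_lambda (fun v (i : Fin n) => v ⟨i.succ, by simp [Fin.succ_ne_zero]⟩)
      fun i => measurable_pi_apply _)

/-- `0 ≤ t` takes care of an empty `ι`, where the real `⨆` is `0`. -/
lemma ProbabilityTheory.iIndepFun.measureReal_iSup_le {ι : Type*} [Fintype ι]
    {X : ι → Ω → ℝ} (hX : iIndepFun X μ) {t : ℝ} (ht : 0 ≤ t) :
    μ.real {ω | ⨆ i, X i ω ≤ t} = ∏ i, μ.real (X i ⁻¹' Iic t) := by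
  have hset : {ω | ⨆ i, X i ω ≤ t} = ⋂ i, X i ⁻¹' Iic t := by
    ext ω
    simp only [mem_iInter, mem_preimage, mem_Iic, Set.mem_ofPred_eq]
    exact ⟨fun h i => (le_ciSup (Finite.bddAbove_range _) i).trans h,
      fun h => Real.iSup_le h ht⟩
  rw [hset, measureReal_def, hX.meas_iInter fun i => ⟨Iic t, measurableSet_Iic, rfl⟩,
    ENNReal.toReal_prod]
  rfl

lemma measureReal_lt_iSup_of_iIndepFun_expMeasure [IsProbabilityMeasure μ] {ι : Type*}
    [Fintype ι] {X : ι → Ω → ℝ} (hX : iIndepFun X μ) (hXm : ∀ i, Measurable (X i))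
    {r : ℝ} (hr : 0 < r) (hlaw : ∀ i, μ.map (X i) = expMeasure r) {t : ℝ} (ht : 0 ≤ t) :
    μ.real {ω | t < ⨆ i, X i ω} = 1 - (1 - exp (-(r * t))) ^ Fintype.card ι := by
  have hcdf : ∀ i, μ.real (X i ⁻¹' Iic t) = 1 - exp (-(r * t)) := by
    intro i
    have := isProbabilityMeasure_expMeasure hr
    rw [← map_measureReal_apply (hXm i) measurableSet_Iic, hlaw i, ← cdf_eq_real,
      cdf_expMeasure_eq hr, if_pos ht]
  have hcompl : {ω | t < ⨆ i, X i ω} = {ω | ⨆ i, X i ω ≤ t}ᶜ := by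
    ext ω; simp
  rw [hcompl, measureReal_compl (measurableSet_le (Measurable.iSup hXm) measurable_const),
    hX.measureReal_iSup_le ht, probReal_univ]
  simp [hcdf]

lemma ProbabilityTheory.IndepFun.measureReal_mem_and_lt_eq_setIntegral [IsFiniteMeasure μ]
    {X Y : Ω → ℝ} (hXY : IndepFun X Y μ) (hX : Measurable X) (hY : Measurable Y)
    {A : Set ℝ} (hA : MeasurableSet A) {f : ℝ → ℝ} (hf : Measurable f) :
    μ.real {ω | X ω ∈ A ∧ f (X ω) < Y ω} =
      ∫ x in A, μ.real {ω | f x < Y ω} ∂(μ.map X) := by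
  set S : Set (ℝ × ℝ) := {p | p.1 ∈ A ∧ f p.1 < p.2}
  have hS : MeasurableSet S :=
    (measurable_fst hA).inter (measurableSet_lt (hf.comp measurable_fst) measurable_snd)
  have hsection : ∀ x, (μ.map Y).real (Prod.mk x ⁻¹' S) =
      A.indicator (fun x => μ.real {ω | f x < Y ω}) x := by
    intro x
    by_cases hx : x ∈ A
    · simp only [S, indicator_of_mem hx, preimage_ofPred_eq, hx, true_and]
      exact map_measureReal_apply hY measurableSet_Ioi
    · simp [S, hx]
  calc μ.real {ω | X ω ∈ A ∧ f (X ω) < Y ω}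
      = ((μ.map X).prod (μ.map Y)).real S := by
        rw [← (indepFun_iff_map_prod_eq_prod_map_map hX.aemeasurable hY.aemeasurable).mp hXY,
          map_measureReal_apply (hX.prodMk hY) hS]
        rfl
    _ = ∫ x, (μ.map Y).real (Prod.mk x ⁻¹' S) ∂(μ.map X) := by
        rw [measureReal_def, Measure.prod_apply hS, ← integral_toReal]
        · rfl
        · exact (measurable_measure_prodMk_left hS).aemeasurable
        · exact ae_of_all _ fun x => measure_lt_top _ _
    _ = ∫ x in A, μ.real {ω | f x < Y ω} ∂(μ.map X) := by
        simp_rw [hsection]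
        exact integral_indicator hA

lemma measureReal_mem_Ioo_and_lt_iSup_eq [IsProbabilityMeasure μ] {M : ℕ} {G : Ω → ℝ}
    {H : Fin M → Ω → ℝ} (hGH : iIndepFun (Fin.cons G H : Fin (M + 1) → Ω → ℝ) μ)
    (hGm : Measurable G) (hHm : ∀ m, Measurable (H m))
    (hGlaw : μ.map G = expMeasure 1) (hHlaw : ∀ m, μ.map (H m) = expMeasure 1)
    {a b p q : ℝ} (ha : 0 ≤ a) (hab : a ≤ b) (hq : 0 ≤ q) (hpa : p ≤ q * a) :
    μ.real {ω | G ω ∈ Ioo a b ∧ q * G ω - p < ⨆ m, H m ω} =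
      exp (-a) - exp (-b) -
        ∑ i ∈ Finset.range (M + 1),
          (M.choose i : ℝ) * (-1) ^ i * exp (i * p) * uFun a b (i * q) := by
  have hH : iIndepFun H μ := hGH.precomp (g := Fin.succ) (Fin.succ_injective M)
  have hGZ : IndepFun G (fun ω => ⨆ m, H m ω) μ :=
    (hGH.indepFun_head_tail hGm hHm).comp measurable_id
      (Measurable.iSup fun m => measurable_pi_apply m)
  have htail : EqOn (fun x => 1 * exp (-(1 * x)) * μ.real {ω | q * x - p < ⨆ m, H m ω})
      (fun x => exp (-x) - exp (-x) * (1 - exp (-(q * x - p))) ^ M) (Ioo a b) := by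
    intro x hx
    have : 0 ≤ q * x - p := by nlinarith [hx.1]
    simp only [measureReal_lt_iSup_of_iIndepFun_expMeasure hH hHm one_pos hHlaw this,
      Fintype.card_fin, one_mul]
    ring
  rw [hGZ.measureReal_mem_and_lt_eq_setIntegral hGm (Measurable.iSup hHm) measurableSet_Ioo
    (f := fun x => q * x - p) (by fun_prop), hGlaw,
    setIntegral_expMeasure one_pos measurableSet_Ioo fun x hx => mem_Ici.mpr (ha.trans hx.1.le),
    setIntegral_congr_fun measurableSet_Ioo htail,
    ← integral_Ioc_eq_integral_Ioo, ← intervalIntegral.integral_of_le hab,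
    intervalIntegral.integral_sub ((by fun_prop : Continuous _).intervalIntegrable _ _)
      ((by fun_prop : Continuous _).intervalIntegrable _ _),
    intervalIntegral.integral_comp_neg exp, integral_exp,
    intervalIntegral_exp_neg_mul_one_sub_exp_pow a b p q hq]

end Probability

lemma tau_of_lt {α g : ℝ} (hα : 0 < α) (hg : α < g) : tau α g = g / α - 1 :=
  max_eq_right (by rw [sub_nonneg, le_div_iff₀ hα]; linarith)

lemma gt_tau_and_logb_one_add_tau_lt_iff {α Ps Rs g z : ℝ} (hα : 0 < α) (hPs : 0 < Ps) :
    (Ps * z > tau α g ∧ logb 2 (1 + tau α g) < Rs ∧ g > α) ↔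
      g ∈ Ioo α (2 ^ Rs * α) ∧ (g / α - 1) / Ps < z := by
  by_cases hg : α < g
  · have hpos : 0 < g / α := div_pos (hα.trans hg) hα
    rw [tau_of_lt hα hg, add_sub_cancel, logb_lt_iff_lt_rpow one_lt_two hpos,
      div_lt_iff₀ hα, div_lt_iff₀' hPs]
    simp only [mem_Ioo, gt_iff_lt]
    tauto
  · simp only [mem_Ioo, gt_iff_lt, hg, false_and, and_false]

theorem fsic_pa_Ftilde_closed_form_general
    {Ω : Type*} [MeasurableSpace Ω] (μ : Measure Ω) [IsProbabilityMeasure μ]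
    (M : ℕ)
    (P0 Ps R0 Rs : ℝ) (hP0 : 0 < P0) (hPs : 0 < Ps) (hR0 : 0 < R0) (hRs : 0 < Rs)
    (ε0 εs α0 α1 : ℝ)
    (hε0 : ε0 = 2 ^ R0 - 1) (hεs : εs = 2 ^ Rs - 1)
    (hα0 : α0 = ε0 / P0) (hα1 : α1 = (1 + εs) * α0)
    (G : Ω → ℝ) (H : Fin M → Ω → ℝ)
    (hGmeas : Measurable G) (hHmeas : ∀ m, Measurable (H m))
    (hGdist : Measure.map G μ = expMeasure 1)
    (hHdist : ∀ m, Measure.map (H m) μ = expMeasure 1)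
    (hIndep : iIndepFun
      (Fin.cons G H : Fin (M + 1) → Ω → ℝ) μ)
    (Z : Ω → ℝ) (hZ : ∀ ω, Z ω = ⨆ m : Fin M, H m ω)
    :
    (μ {ω | Ps * Z ω > tau α0 (G ω) ∧
            Real.logb 2 (1 + tau α0 (G ω)) < Rs ∧ G ω > α0}).toReal =
      Real.exp (-α0) - Real.exp (-α1) -
        ∑ i ∈ Finset.range (M + 1),
          (M.choose i : ℝ) * (-1 : ℝ) ^ i * Real.exp ((i : ℝ) / Ps) *
            uFun α0 α1 ((i : ℝ) / (Ps * α0)) := by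
  have hα0_pos : 0 < α0 := by
    rw [hα0, hε0]
    exact div_pos (sub_pos.mpr (one_lt_rpow one_lt_two hR0)) hP0
  have hα1_eq : α1 = 2 ^ Rs * α0 := by rw [hα1, hεs]; ring
  have hα0_le_α1 : α0 ≤ α1 := by
    rw [hα1_eq]
    exact le_mul_of_one_le_left hα0_pos.le (one_le_rpow one_le_two hRs.le)
  have hevent :
      {ω | Ps * Z ω > tau α0 (G ω) ∧ logb 2 (1 + tau α0 (G ω)) < Rs ∧ G ω > α0} =
        {ω | G ω ∈ Ioo α0 α1 ∧ (Ps * α0)⁻¹ * G ω - Ps⁻¹ < ⨆ m, H m ω} := by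
    ext ω
    simp only [mem_ofPred_eq, gt_tau_and_logb_one_add_tau_lt_iff hα0_pos hPs, hZ, hα1_eq]
    field_simp
  rw [← measureReal_def, hevent, measureReal_mem_Ioo_and_lt_iSup_eq hIndep hGmeas hHmeas hGdist
    hHdist hα0_pos.le hα0_le_α1 (by positivity) (le_of_eq (by field_simp))]
  simp only [← div_eq_mul_inv]

/-- closed form for the probability `F̃` appearing in the proof of
Theorem 2 for the FSIC-PA scheme. -/
theorem fsic_pa_Ftilde_closed_form
    {Ω : Type*} [MeasurableSpace Ω] (μ : Measure Ω) [IsProbabilityMeasure μ]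
    (M : ℕ) (hM : 1 ≤ M)
    (P0 Ps R0 Rs : ℝ) (hP0 : 0 < P0) (hPs : 0 < Ps) (hR0 : 0 < R0) (hRs : 0 < Rs)
    (ε0 εs α0 αs α1 : ℝ)
    (hε0 : ε0 = 2 ^ R0 - 1) (hεs : εs = 2 ^ Rs - 1)
    (hα0 : α0 = ε0 / P0) (hαs : αs = εs / Ps) (hα1 : α1 = (1 + εs) * α0)
    (G : Ω → ℝ) (H : Fin M → Ω → ℝ)
    (hGmeas : Measurable G) (hHmeas : ∀ m, Measurable (H m))
    (hGnn : ∀ ω, 0 ≤ G ω) (hHnn : ∀ m ω, 0 ≤ H m ω)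
    (hGdist : Measure.map G μ = expMeasure 1)
    (hHdist : ∀ m, Measure.map (H m) μ = expMeasure 1)
    (hIndep : iIndepFun
      (Fin.cons G H : Fin (M + 1) → Ω → ℝ) μ)
    (Z : Ω → ℝ) (hZ : ∀ ω, Z ω = ⨆ m : Fin M, H m ω)
    :
    (μ {ω | Ps * Z ω > tau α0 (G ω) ∧
            Real.logb 2 (1 + tau α0 (G ω)) < Rs ∧ G ω > α0}).toReal =
      Real.exp (-α0) - Real.exp (-α1) -
        ∑ i ∈ Finset.range (M + 1),
          (M.choose i : ℝ) * (-1 : ℝ) ^ i * Real.exp ((i : ℝ) / Ps) *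
            uFun α0 α1 ((i : ℝ) / (Ps * α0)) :=
  fsic_pa_Ftilde_closed_form_general μ M P0 Ps R0 Rs hP0 hPs hR0 hRs ε0 εs α0 α1 hε0 hεs hα0 hα1 G H
    hGmeas hHmeas hGdist hHdist hIndep Z hZ
end
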